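/- Let M ∈ S^{n+k}_{++} and let μ : R^n → R^k be L₁-Lipschitz (‖μ(ξ) − μ(ξ̄)‖ ≤ L₁‖ξ − ξ̄‖). Define ψ(ξ) = ‖(ξ, μ(ξ))‖_M, where (ξ, μ(ξ)) denotes the concatenated vector. Then |ψ(ξ) − ψ(ξ̄)| ≤ δ‖ξ − ξ̄‖ for all ξ, ξ̄, where, writing M = [[W, Gᵀ],[G, H]], δ² = λ⁺(W) + L₁²λ⁺(H) + 2L₁‖G‖. -/

import Mathlib

/-! Write `u = ξ - ξ'` and `v = μ ξ - μ ξ'`. By the reverse triangle inequality for the `M`-norm,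
`|ψ ξ - ψ ξ'| ≤ ‖(u, v)‖_M`, and the block expansion `‖(u, v)‖_M² = uᵀWu + 2 vᵀGu + vᵀHv` is
bounded term by term: the Rayleigh quotient bounds `uᵀWu` and `vᵀHv`, Cauchy–Schwarz with
`‖Gu‖ ≤ ‖G‖ ‖u‖` bounds the cross term, and `‖v‖ ≤ L₁ ‖u‖` turns everything into a multiple
of `‖u‖²`. -/

open Matrix

noncomputable def euclNorm {ι : Type*} [Fintype ι] (x : ι → ℝ) : ℝ := Real.sqrt (x ⬝ᵥ x)
noncomputable def qNorm {ι : Type*} [Fintype ι] (M : Matrix ι ι ℝ) (x : ι → ℝ) : ℝ :=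
  Real.sqrt (x ⬝ᵥ M.mulVec x)
noncomputable def lamMax {ι : Type*} [Fintype ι] [DecidableEq ι] (M : Matrix ι ι ℝ) : ℝ :=
  sSup (spectrum ℝ M)
noncomputable def opN {ι κ : Type*} [Fintype ι] [Fintype κ] [DecidableEq κ]
    (G : Matrix ι κ ℝ) : ℝ := Real.sqrt (sSup (spectrum ℝ (Gᵀ * G)))

section

variable {ι κ : Type*} [Fintype ι] [Fintype κ]

lemma euclNorm_eq_norm_toLp (x : ι → ℝ) : euclNorm x = ‖WithLp.toLp 2 x‖ := by
  rw [norm_eq_sqrt_real_inner, EuclideanSpace.inner_toLp_toLp, star_trivial, euclNorm]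

lemma euclNorm_nonneg (x : ι → ℝ) : 0 ≤ euclNorm x := Real.sqrt_nonneg _

lemma euclNorm_sq (x : ι → ℝ) : euclNorm x ^ 2 = x ⬝ᵥ x := by
  rw [euclNorm_eq_norm_toLp, ← real_inner_self_eq_norm_sq, EuclideanSpace.inner_toLp_toLp,
    star_trivial]

lemma dotProduct_le_euclNorm_mul_euclNorm (x y : ι → ℝ) : x ⬝ᵥ y ≤ euclNorm x * euclNorm y := by
  simpa only [euclNorm_eq_norm_toLp, EuclideanSpace.inner_toLp_toLp, star_trivial,
    dotProduct_comm y] using real_inner_le_norm (WithLp.toLp 2 x) (WithLp.toLp 2 y)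

lemma abs_qNorm_sub_qNorm_le {M : Matrix ι ι ℝ} (hM : M.PosDef) (x y : ι → ℝ) :
    |qNorm M x - qNorm M y| ≤ qNorm M (x - y) := by
  let N := Matrix.toNormedAddCommGroup M hM
  have hnorm : ∀ z : ι → ℝ, qNorm M z = @norm _ N.toNorm z := fun z => by
    show _ = Real.sqrt (RCLike.re ((M *ᵥ z) ⬝ᵥ star z))
    simp [qNorm, dotProduct_comm]
  simpa only [hnorm] using @abs_norm_sub_norm_le _ N.toSeminormedAddCommGroup x y

lemma sumElim_dotProduct_fromBlocks_mulVec (W : Matrix ι ι ℝ) (H : Matrix κ κ ℝ)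
    (G : Matrix κ ι ℝ) (u : ι → ℝ) (v : κ → ℝ) :
    Sum.elim u v ⬝ᵥ fromBlocks W Gᵀ G H *ᵥ Sum.elim u v
      = u ⬝ᵥ W *ᵥ u + 2 * (v ⬝ᵥ G *ᵥ u) + v ⬝ᵥ H *ᵥ v := by
  have hcross : u ⬝ᵥ Gᵀ *ᵥ v = v ⬝ᵥ G *ᵥ u := by
    rw [dotProduct_mulVec, vecMul_transpose, dotProduct_comm]
  rw [fromBlocks_mulVec, sumElim_dotProduct_sumElim, Sum.elim_comp_inl, Sum.elim_comp_inr,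
    dotProduct_add, dotProduct_add, hcross]
  ring

variable [DecidableEq ι]

open scoped MatrixOrder in
lemma dotProduct_mulVec_le_lamMax_mul {A : Matrix ι ι ℝ} (hA : A.IsHermitian) (x : ι → ℝ) :
    x ⬝ᵥ A *ᵥ x ≤ lamMax A * (x ⬝ᵥ x) := by
  have hle : A ≤ algebraMap ℝ _ (lamMax A) :=
    le_algebraMap_of_spectrum_le (fun r hr => le_csSup
      (hA.spectrum_real_eq_range_eigenvalues ▸ (Set.finite_range _).bddAbove) hr) hA.isSelfAdjoint
  simpa [sub_mulVec, dotProduct_sub, Algebra.algebraMap_eq_smul_one, smul_mulVec, dotProduct_smul]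
    using (Matrix.le_iff.mp hle).dotProduct_mulVec_nonneg x

lemma lamMax_nonneg {A : Matrix ι ι ℝ} (hA : A.PosSemidef) : 0 ≤ lamMax A := by
  rcases isEmpty_or_nonempty ι with h | ⟨⟨i⟩⟩
  · simp [lamMax]
  · exact (hA.eigenvalues_nonneg i).trans (le_csSup
      (hA.isHermitian.spectrum_real_eq_range_eigenvalues ▸ (Set.finite_range _).bddAbove)
      (hA.isHermitian.eigenvalues_mem_spectrum_real i))

lemma euclNorm_mulVec_le (G : Matrix κ ι ℝ) (x : ι → ℝ) :
    euclNorm (G *ᵥ x) ≤ opN G * euclNorm x := by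
  have hGx : x ⬝ᵥ (Gᵀ * G) *ᵥ x = (G *ᵥ x) ⬝ᵥ (G *ᵥ x) := by
    rw [← mulVec_mulVec, dotProduct_mulVec, vecMul_transpose]
  rw [opN, euclNorm, euclNorm, ← Real.sqrt_mul' _ (by simpa using dotProduct_star_self_nonneg x),
    ← hGx]
  exact Real.sqrt_le_sqrt <|
    dotProduct_mulVec_le_lamMax_mul (isHermitian_conjTranspose_mul_self G) x

variable [DecidableEq κ]

lemma sumElim_dotProduct_fromBlocks_mulVec_le {W : Matrix ι ι ℝ} {H : Matrix κ κ ℝ}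
    (G : Matrix κ ι ℝ) (hW : W.IsHermitian) (hH : H.PosSemidef) {L : ℝ} {u : ι → ℝ}
    {v : κ → ℝ} (hv : euclNorm v ≤ L * euclNorm u) :
    Sum.elim u v ⬝ᵥ fromBlocks W Gᵀ G H *ᵥ Sum.elim u v
      ≤ (lamMax W + L ^ 2 * lamMax H + 2 * L * opN G) * euclNorm u ^ 2 := by
  have hv₀ := euclNorm_nonneg v
  have hWu : u ⬝ᵥ W *ᵥ u ≤ lamMax W * euclNorm u ^ 2 := by
    simpa only [euclNorm_sq] using dotProduct_mulVec_le_lamMax_mul hW u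
  have hHv : v ⬝ᵥ H *ᵥ v ≤ lamMax H * (L * euclNorm u) ^ 2 := by
    calc v ⬝ᵥ H *ᵥ v ≤ lamMax H * euclNorm v ^ 2 := by
          simpa only [euclNorm_sq] using dotProduct_mulVec_le_lamMax_mul hH.isHermitian v
      _ ≤ lamMax H * (L * euclNorm u) ^ 2 := by
          gcongr
          exact lamMax_nonneg hH
  have hGuv : v ⬝ᵥ G *ᵥ u ≤ (L * euclNorm u) * (opN G * euclNorm u) :=
    (dotProduct_le_euclNorm_mul_euclNorm v _).trans
      (mul_le_mul hv (euclNorm_mulVec_le G u) (euclNorm_nonneg _) (hv₀.trans hv))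
  rw [sumElim_dotProduct_fromBlocks_mulVec]
  linear_combination hWu + 2 * hGuv + hHv

lemma qNorm_fromBlocks_sumElim_le {W : Matrix ι ι ℝ} {H : Matrix κ κ ℝ}
    (G : Matrix κ ι ℝ) (hW : W.IsHermitian) (hH : H.PosSemidef) {L : ℝ} {u : ι → ℝ}
    {v : κ → ℝ} (hv : euclNorm v ≤ L * euclNorm u) :
    qNorm (fromBlocks W Gᵀ G H) (Sum.elim u v)
      ≤ Real.sqrt (lamMax W + L ^ 2 * lamMax H + 2 * L * opN G) * euclNorm u := by
  rw [qNorm, ← Real.sqrt_sq (euclNorm_nonneg u), ← Real.sqrt_mul' _ (sq_nonneg _)]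
  exact Real.sqrt_le_sqrt (sumElim_dotProduct_fromBlocks_mulVec_le G hW hH hv)

end

theorem stmt2_general {n k : ℕ}
    (W : Matrix (Fin n) (Fin n) ℝ) (H : Matrix (Fin k) (Fin k) ℝ)
    (G : Matrix (Fin k) (Fin n) ℝ)
    (hM : (Matrix.fromBlocks W Gᵀ G H).PosDef)
    (μ : (Fin n → ℝ) → (Fin k → ℝ)) (L₁ : ℝ)
    (hμ : ∀ ξ ξ', euclNorm (μ ξ - μ ξ') ≤ L₁ * euclNorm (ξ - ξ'))
    (ψ : (Fin n → ℝ) → ℝ)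
    (hψ : ∀ ξ, ψ ξ = qNorm (Matrix.fromBlocks W Gᵀ G H) (Sum.elim ξ (μ ξ))) :
    ∀ ξ ξ', |ψ ξ - ψ ξ'| ≤
      Real.sqrt (lamMax W + L₁^2 * lamMax H + 2 * L₁ * opN G) * euclNorm (ξ - ξ') := by
  intro ξ ξ'
  have hW : W.IsHermitian := (hM.posSemidef.submatrix Sum.inl).isHermitian
  have hH : H.PosSemidef := hM.posSemidef.submatrix Sum.inr
  rw [hψ, hψ]
  calc _ ≤ qNorm (fromBlocks W Gᵀ G H) (Sum.elim ξ (μ ξ) - Sum.elim ξ' (μ ξ')) :=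
        abs_qNorm_sub_qNorm_le hM _ _
    _ = qNorm (fromBlocks W Gᵀ G H) (Sum.elim (ξ - ξ') (μ ξ - μ ξ')) := by
        rw [Sum.elim_sub_sub]
    _ ≤ _ := qNorm_fromBlocks_sumElim_le G hW hH (hμ ξ ξ')

theorem stmt2 {n k : ℕ}
    (W : Matrix (Fin n) (Fin n) ℝ) (H : Matrix (Fin k) (Fin k) ℝ)
    (G : Matrix (Fin k) (Fin n) ℝ)
    (hM : (Matrix.fromBlocks W Gᵀ G H).PosDef)
    (μ : (Fin n → ℝ) → (Fin k → ℝ)) (L₁ : ℝ) (hL₁ : 0 < L₁)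
    (hμ : ∀ ξ ξ', euclNorm (μ ξ - μ ξ') ≤ L₁ * euclNorm (ξ - ξ'))
    (ψ : (Fin n → ℝ) → ℝ)
    (hψ : ∀ ξ, ψ ξ = qNorm (Matrix.fromBlocks W Gᵀ G H) (Sum.elim ξ (μ ξ))) :
    ∀ ξ ξ', |ψ ξ - ψ ξ'| ≤
      Real.sqrt (lamMax W + L₁^2 * lamMax H + 2 * L₁ * opN G) * euclNorm (ξ - ξ') :=
  stmt2_general W H G hM μ L₁ hμ ψ hψ
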